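/- For every integer t ≥ 1, there exist a constant c_t > 0 depending only on t and infinitely many graphs G with path-independence number path-α(G) = t such that for every λ ≥ 1, the mixing time of the Glauber dynamics on the independent sets of G with fugacity λ satisfies τ_{G,λ} ≥ c_t · (nλ)^t, where n = |V(G)|. -/

import Mathlib

open Finset

section HardCoreDefs

variable {V : Type*} [Fintype V] [DecidableEq V]

/-- `I` is an independent set of the simple graph `G`. -/
def IsIndep (G : SimpleGraph V) (I : Finset V) : Prop :=
  ∀ u ∈ I, ∀ v ∈ I, ¬ G.Adj u v

open Classical in
/-- The set `𝓘(G)` of independent sets of `G`. -/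
noncomputable def indepSets (G : SimpleGraph V) : Finset (Finset V) :=
  Finset.univ.filter fun I => IsIndep G I

/-- The hard-core partition function `Z_G(λ)`. -/
noncomputable def Z (G : SimpleGraph V) (lam : ℝ) : ℝ :=
  ∑ I ∈ indepSets G, lam ^ I.card

/-- The hard-core distribution `π_{G,λ}`. -/
noncomputable def hardCore (G : SimpleGraph V) (lam : ℝ) (I : Finset V) : ℝ :=
  lam ^ I.card / Z G lam

open Classical in
/-- The transition probabilities of the Glauber dynamics on independent sets of `G`
with fugacity `λ`. -/
noncomputable def glauberP (G : SimpleGraph V) (lam : ℝ) (I J : Finset V) : ℝ :=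
  (1 / (Fintype.card V : ℝ)) * ∑ v : V,
    if v ∈ I then
      (if J = I.erase v then 1 / (lam + 1) else if J = I then lam / (lam + 1) else 0)
    else if IsIndep G (insert v I) then
      (if J = insert v I then lam / (lam + 1) else if J = I then 1 / (lam + 1) else 0)
    else (if J = I then 1 else 0)

/-- One step of the Glauber dynamics, applied to a distribution on independent sets. -/
noncomputable def stepDist (G : SimpleGraph V) (lam : ℝ) (μ : Finset V → ℝ) :
    Finset V → ℝ :=
  fun J => ∑ I ∈ indepSets G, μ I * glauberP G lam I J

/-- The distribution of the Glauber dynamics after `t` steps started from `I`. -/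
noncomputable def distAfter (G : SimpleGraph V) (lam : ℝ) (I : Finset V) (t : ℕ) :
    Finset V → ℝ :=
  (stepDist G lam)^[t] (fun J => if J = I then 1 else 0)

/-- Total variation distance between two distributions on independent sets. -/
noncomputable def tvDist (G : SimpleGraph V) (μ ν : Finset V → ℝ) : ℝ :=
  (1 / 2) * ∑ I ∈ indepSets G, |μ I - ν I|

/-- The mixing time `τ_{G,λ}` of the Glauber dynamics. -/
noncomputable def mixingTime (G : SimpleGraph V) (lam : ℝ) : ℕ :=
  sInf {t : ℕ | ∀ I ∈ indepSets G,
    tvDist G (distAfter G lam I t) (hardCore G lam) ≤ 1 / 4}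

/-- `λ̃ = e^{|ln λ|} = max (λ, 1/λ)`. -/
noncomputable def lamTilde (lam : ℝ) : ℝ := max lam lam⁻¹

/-- The independence number of the subgraph of `G` induced by `S`. -/
noncomputable def alphaOn (G : SimpleGraph V) (S : Finset V) : ℕ :=
  ((indepSets G).filter fun I => I ⊆ S).sup Finset.card

/-- The number of independent sets of the subgraph of `G` induced by `S`. -/
noncomputable def numIndepOn (G : SimpleGraph V) (S : Finset V) : ℕ :=
  ((indepSets G).filter fun I => I ⊆ S).card

/-- The subgraph of `G` induced by a finite vertex set `S`. -/
def inducedF (G : SimpleGraph V) (S : Finset V) : SimpleGraph {x : V // x ∈ S} :=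
  SimpleGraph.comap Subtype.val G

end HardCoreDefs
section Decomp

variable {V : Type*} [Fintype V] [DecidableEq V]

/-- `X : Fin p → Finset V` is a path decomposition of `G`. -/
def IsPathDecomp (G : SimpleGraph V) (p : ℕ) (X : Fin p → Finset V) : Prop :=
  (∀ v : V, ∃ i, v ∈ X i) ∧
  (∀ u v : V, G.Adj u v → ∃ i, u ∈ X i ∧ v ∈ X i) ∧
  (∀ v : V, ∀ i j k : Fin p, i ≤ j → j ≤ k → v ∈ X i → v ∈ X k → v ∈ X j)

/-- The pathwidth of `G` : the least `w` such that `G` has a path decomposition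
with all bags of size at most `w + 1`. -/
noncomputable def pathwidth (G : SimpleGraph V) : ℕ :=
  sInf {w : ℕ | ∃ (p : ℕ) (X : Fin p → Finset V),
    IsPathDecomp G p X ∧ ∀ i, (X i).card ≤ w + 1}

/-- `(T, X)` is a tree decomposition of `G`. -/
def IsTreeDecomp {ι : Type*} (G : SimpleGraph V) (T : SimpleGraph ι) (X : ι → Finset V) : Prop :=
  T.IsTree ∧
  (∀ v : V, ∃ t, v ∈ X t) ∧
  (∀ u v : V, G.Adj u v → ∃ t, u ∈ X t ∧ v ∈ X t) ∧
  (∀ v : V, (T.induce {t | v ∈ X t}).Connected)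

/-- The treewidth of `G`. -/
noncomputable def treewidth (G : SimpleGraph V) : ℕ :=
  sInf {w : ℕ | ∃ (m : ℕ) (T : SimpleGraph (Fin m)) (X : Fin m → Finset V),
    IsTreeDecomp G T X ∧ ∀ t, (X t).card ≤ w + 1}

end Decomp
section AlphaDecomp

variable {V : Type*} [Fintype V] [DecidableEq V]

/-- The path-independence number of `G`: the minimum, over path decompositions of `G`, of the
maximum independence number of a bag. -/
noncomputable def pathAlpha (G : SimpleGraph V) : ℕ :=
  sInf {k : ℕ | ∃ (p : ℕ) (X : Fin p → Finset V),
    IsPathDecomp G p X ∧ ∀ i, alphaOn G (X i) ≤ k}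

/-- The tree-independence number of `G`: the minimum, over tree decompositions of `G`, of the
maximum independence number of a bag. -/
noncomputable def treeAlpha (G : SimpleGraph V) : ℕ :=
  sInf {k : ℕ | ∃ (m : ℕ) (T : SimpleGraph (Fin m)) (X : Fin m → Finset V),
    IsTreeDecomp G T X ∧ ∀ t, alphaOn G (X t) ≤ k}

end AlphaDecomp

/-!
The graphs are `t` disjoint cliques `K_m` on a vertex set `W`, completely joined to an independent
set `R` of `t m + 2` vertices, so `n = 2 t m + 2`. The bags `W ∪ {v}` show `path-α ≤ t`.
Conversely, a transversal of the cliques and `R` are independent sets of size at least `t` that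
are complete to each other, and in any path decomposition one of two such sets lies in a single
bag.

For the mixing time, let `A` be the set of nonempty independent subsets of `W`. The transversals
give `A` weight at least `(m λ)^t`, while `R` alone gives `Z ≥ 4 (1 + λ)^{t m}`, so `π(A) ≤ 1/4`.
The chain leaves `A` only by emptying a singleton, so by reversibility the stationary flow out
of `A` is at most the weight `1` of `∅`. The bottleneck inequality `w(A) ≤ 2 τ · flow(A)`, where
`w(A) = ∑_{I ∈ A} λ^{|I|}`, then gives `τ ≥ (m λ)^t / 2`. As `mixingTime` is an `sInf`, this also
needs the chain to mix at all, which follows from a Doeblin minorization.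
-/

lemma sum_ite_eq_ite_eq {α : Type*} [DecidableEq α] {s : Finset α} {a b : α} (hab : a ≠ b)
    (x y : ℝ) :
    ∑ c ∈ s, (if c = a then x else if c = b then y else 0)
      = (if a ∈ s then x else 0) + (if b ∈ s then y else 0) := by
  rw [← Finset.sum_ite_eq' s a (fun _ => x), ← Finset.sum_ite_eq' s b (fun _ => y),
    ← Finset.sum_add_distrib]
  refine Finset.sum_congr rfl fun c _ => ?_
  by_cases h : c = a
  · simp [h, hab]
  · simp [h]

lemma sum_abs_sum_mul_sub_le_of_le {α : Type*} {S : Finset α} {K : α → α → ℝ} {μ π : α → ℝ}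
    {δ : ℝ} (hK : ∀ a ∈ S, ∀ b ∈ S, δ ≤ K a b) (hrow : ∀ a ∈ S, ∑ b ∈ S, K a b = 1)
    (hπ : ∀ b ∈ S, ∑ a ∈ S, π a * K a b = π b) (hμ : ∑ a ∈ S, μ a = ∑ a ∈ S, π a) :
    ∑ b ∈ S, |∑ a ∈ S, μ a * K a b - π b| ≤ (1 - δ * #S) * ∑ a ∈ S, |μ a - π a| := by
  -- subtracting the constant `δ` from `K` changes nothing, as `μ - π` has total mass `0`
  have hshift : ∀ b ∈ S, ∑ a ∈ S, μ a * K a b - π b = ∑ a ∈ S, (μ a - π a) * (K a b - δ) := by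
    intro b hb
    have hδ : ∑ a ∈ S, (μ a - π a) * δ = 0 := by
      rw [← Finset.sum_mul, Finset.sum_sub_distrib, hμ, sub_self, zero_mul]
    simp_rw [sub_mul, mul_sub, Finset.sum_sub_distrib] at hδ ⊢
    rw [hπ b hb]
    linarith
  calc ∑ b ∈ S, |∑ a ∈ S, μ a * K a b - π b|
      ≤ ∑ b ∈ S, ∑ a ∈ S, |μ a - π a| * (K a b - δ) := by
        refine Finset.sum_le_sum fun b hb => ?_
        rw [hshift b hb]
        refine (Finset.abs_sum_le_sum_abs _ _).trans (Finset.sum_le_sum fun a ha => ?_)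
        rw [abs_mul, abs_of_nonneg (sub_nonneg.2 (hK a ha b hb))]
    _ = (1 - δ * #S) * ∑ a ∈ S, |μ a - π a| := by
        rw [Finset.sum_comm, Finset.mul_sum]
        refine Finset.sum_congr rfl fun a ha => ?_
        rw [← Finset.mul_sum, Finset.sum_sub_distrib, hrow a ha, Finset.sum_const, nsmul_eq_mul]
        ring

section HardCore

variable {V : Type*} {G : SimpleGraph V} {lam : ℝ}

lemma IsIndep.subset {I J : Finset V} (hJ : IsIndep G J) (h : I ⊆ J) : IsIndep G I :=
  fun u hu v hv => hJ u (h hu) v (h hv)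

variable (lam) in
noncomputable def hardCoreWeight (A : Finset (Finset V)) : ℝ := ∑ I ∈ A, lam ^ I.card

lemma hardCoreWeight_le_of_subset_powerset (hlam : 0 ≤ lam) {A : Finset (Finset V)}
    {W : Finset V} (hA : A ⊆ W.powerset) : hardCoreWeight lam A ≤ (1 + lam) ^ #W := by
  have h := Finset.sum_pow_mul_eq_add_pow lam 1 W
  simp only [one_pow, mul_one] at h
  rw [add_comm, ← h]
  exact Finset.sum_le_sum_of_subset_of_nonneg hA fun I _ _ => by positivity

variable [Fintype V]

lemma mem_indepSets {I : Finset V} : I ∈ indepSets G ↔ IsIndep G I := by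
  classical
  simp [indepSets]

lemma empty_mem_indepSets : ∅ ∈ indepSets G :=
  mem_indepSets.2 fun _ h => absurd h (Finset.notMem_empty _)

lemma one_le_Z (hlam : 0 ≤ lam) : 1 ≤ Z G lam :=
  Finset.single_le_sum (f := fun I : Finset V => lam ^ I.card) (fun I _ => by positivity)
    empty_mem_indepSets |>.trans_eq' (by simp)

lemma pow_card_le_Z (hlam : 0 ≤ lam) {R : Finset V} (hR : IsIndep G R) :
    (1 + lam) ^ #R ≤ Z G lam := by
  have h := Finset.sum_pow_mul_eq_add_pow lam 1 R
  simp only [one_pow, mul_one] at h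
  rw [add_comm, ← h]
  exact Finset.sum_le_sum_of_subset_of_nonneg
    (fun I hI => mem_indepSets.2 (hR.subset (Finset.mem_powerset.1 hI))) fun I _ _ => by positivity

lemma hardCore_nonneg (hlam : 0 ≤ lam) (I : Finset V) : 0 ≤ hardCore G lam I :=
  div_nonneg (by positivity) (zero_le_one.trans (one_le_Z hlam))

lemma sum_hardCore (hlam : 0 ≤ lam) : ∑ I ∈ indepSets G, hardCore G lam I = 1 := by
  unfold hardCore
  rw [← Finset.sum_div]
  exact div_self (zero_lt_one.trans_le (one_le_Z hlam)).ne'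

lemma tvDist_le_one {μ ν : Finset V → ℝ} (hμ : ∀ I ∈ indepSets G, 0 ≤ μ I)
    (hν : ∀ I ∈ indepSets G, 0 ≤ ν I) (hμ1 : ∑ I ∈ indepSets G, μ I = 1)
    (hν1 : ∑ I ∈ indepSets G, ν I = 1) : tvDist G μ ν ≤ 1 := by
  have : ∑ I ∈ indepSets G, |μ I - ν I| ≤ ∑ I ∈ indepSets G, (μ I + ν I) :=
    Finset.sum_le_sum fun I hI => (abs_sub _ _).trans_eq
      (by rw [abs_of_nonneg (hμ I hI), abs_of_nonneg (hν I hI)])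
  rw [Finset.sum_add_distrib, hμ1, hν1] at this
  rw [tvDist]
  linarith

variable (V) in
noncomputable def minMoveProb (lam : ℝ) : ℝ := min 1 lam / (Fintype.card V * (lam + 1))

lemma minMoveProb_pos [Nonempty V] (hlam : 0 < lam) : 0 < minMoveProb V lam := by
  unfold minMoveProb
  have := lt_min one_pos hlam
  positivity

end HardCore

section GlauberKernel

variable {V : Type*} [DecidableEq V] {G : SimpleGraph V} {lam : ℝ}

open Classical in
noncomputable def glauberUpdate (G : SimpleGraph V) (lam : ℝ) (v : V) (I J : Finset V) : ℝ :=
  if v ∈ I then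
    (if J = I.erase v then 1 / (lam + 1) else if J = I then lam / (lam + 1) else 0)
  else if IsIndep G (insert v I) then
    (if J = insert v I then lam / (lam + 1) else if J = I then 1 / (lam + 1) else 0)
  else (if J = I then 1 else 0)

lemma glauberUpdate_nonneg (hlam : 0 ≤ lam) (v : V) (I J : Finset V) :
    0 ≤ glauberUpdate G lam v I J := by
  unfold glauberUpdate
  split_ifs <;> positivity

lemma glauberUpdate_reversible (v : V) {I J : Finset V} (hI : IsIndep G I) (hJ : IsIndep G J) :
    lam ^ I.card * glauberUpdate G lam v I J = lam ^ J.card * glauberUpdate G lam v J I := by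
  rcases eq_or_ne I J with rfl | hne
  · rfl
  unfold glauberUpdate
  by_cases hvI : v ∈ I <;> by_cases hvJ : v ∈ J
  · have h1 : J ≠ I.erase v := fun h => Finset.notMem_erase v I (h ▸ hvJ)
    have h2 : I ≠ J.erase v := fun h => Finset.notMem_erase v J (h ▸ hvI)
    simp [hvI, hvJ, h1, h2, hne, hne.symm]
  · by_cases h : J = I.erase v
    · obtain rfl : I = insert v J := by rw [h, Finset.insert_erase hvI]
      simp [hvJ, Finset.card_insert_of_notMem hvJ, hI, pow_succ]
      ring
    · have hIJ : I ≠ insert v J := fun hh => h (by rw [hh, Finset.erase_insert hvJ])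
      simp [hvI, hvJ, h, hIJ, hne, hne.symm]
  · by_cases h : I = J.erase v
    · obtain rfl : J = insert v I := by rw [h, Finset.insert_erase hvJ]
      simp [hvI, Finset.card_insert_of_notMem hvI, hJ, pow_succ]
      ring
    · have hJI : J ≠ insert v I := fun hh => h (by rw [hh, Finset.erase_insert hvI])
      simp [hvI, hvJ, h, hJI, hne, hne.symm]
  · have h1 : J ≠ insert v I := fun h => hvJ (h ▸ Finset.mem_insert_self v I)
    have h2 : I ≠ insert v J := fun h => hvI (h ▸ Finset.mem_insert_self v J)
    simp [hvI, hvJ, h1, h2, hne, hne.symm]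

variable [Fintype V]

lemma glauberP_eq_sum (G : SimpleGraph V) (lam : ℝ) (I J : Finset V) :
    glauberP G lam I J = (1 / Fintype.card V) * ∑ v, glauberUpdate G lam v I J := rfl

lemma sum_glauberUpdate (hlam : 0 ≤ lam) (v : V) {I : Finset V} (hI : I ∈ indepSets G) :
    ∑ J ∈ indepSets G, glauberUpdate G lam v I J = 1 := by
  have h1 : lam + 1 ≠ 0 := by positivity
  unfold glauberUpdate
  split_ifs with hv hins
  · rw [sum_ite_eq_ite_eq (Finset.erase_ne_self.2 hv), if_pos hI,
      if_pos (mem_indepSets.2 ((mem_indepSets.1 hI).subset (Finset.erase_subset v I)))]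
    field_simp
    ring
  · rw [sum_ite_eq_ite_eq (Finset.insert_ne_self.2 hv), if_pos hI, if_pos (mem_indepSets.2 hins)]
    field_simp
  · rw [Finset.sum_ite_eq', if_pos hI]

lemma glauberP_nonneg (hlam : 0 ≤ lam) (I J : Finset V) : 0 ≤ glauberP G lam I J := by
  rw [glauberP_eq_sum]
  exact mul_nonneg (by positivity)
    (Finset.sum_nonneg fun v _ => glauberUpdate_nonneg hlam v I J)

lemma sum_glauberP [Nonempty V] (hlam : 0 ≤ lam) {I : Finset V} (hI : I ∈ indepSets G) :
    ∑ J ∈ indepSets G, glauberP G lam I J = 1 := by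
  simp_rw [glauberP_eq_sum, ← Finset.mul_sum]
  rw [Finset.sum_comm, Finset.sum_congr rfl fun v _ => sum_glauberUpdate hlam v hI,
    Finset.sum_const, Finset.card_univ, nsmul_one]
  field_simp

lemma glauberP_reversible {I J : Finset V} (hI : I ∈ indepSets G) (hJ : J ∈ indepSets G) :
    lam ^ I.card * glauberP G lam I J = lam ^ J.card * glauberP G lam J I := by
  simp_rw [glauberP_eq_sum, mul_left_comm _ (1 / _ : ℝ), Finset.mul_sum,
    glauberUpdate_reversible _ (mem_indepSets.1 hI) (mem_indepSets.1 hJ)]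

lemma sum_pow_card_mul_glauberP [Nonempty V] (hlam : 0 ≤ lam) {J : Finset V}
    (hJ : J ∈ indepSets G) :
    ∑ I ∈ indepSets G, lam ^ I.card * glauberP G lam I J = lam ^ J.card := by
  rw [Finset.sum_congr rfl fun I hI => glauberP_reversible hI hJ, ← Finset.mul_sum,
    sum_glauberP hlam hJ, mul_one]

lemma minMoveProb_le_glauberP (hlam : 0 ≤ lam) {I J : Finset V} (v : V)
    (hv : min 1 lam / (lam + 1) ≤ glauberUpdate G lam v I J) :
    minMoveProb V lam ≤ glauberP G lam I J := by
  rw [glauberP_eq_sum, minMoveProb, div_mul_eq_div_div_swap, div_eq_mul_one_div, mul_comm]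
  gcongr
  exact hv.trans (Finset.single_le_sum (fun w _ => glauberUpdate_nonneg hlam w I J)
    (Finset.mem_univ v))

lemma minMoveProb_le_glauberP_erase (hlam : 0 ≤ lam) {I : Finset V} {v : V} (hv : v ∈ I) :
    minMoveProb V lam ≤ glauberP G lam I (I.erase v) := by
  refine minMoveProb_le_glauberP hlam v ?_
  rw [glauberUpdate, if_pos hv, if_pos rfl]
  gcongr
  exact min_le_left _ _

lemma minMoveProb_le_glauberP_insert (hlam : 0 ≤ lam) {I : Finset V} {v : V} (hv : v ∉ I)
    (hins : IsIndep G (insert v I)) :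
    minMoveProb V lam ≤ glauberP G lam I (insert v I) := by
  refine minMoveProb_le_glauberP hlam v ?_
  rw [glauberUpdate, if_neg hv, if_pos hins, if_pos rfl]
  gcongr
  exact min_le_right _ _

lemma minMoveProb_le_glauberP_self [Nonempty V] (hlam : 0 ≤ lam) (I : Finset V) :
    minMoveProb V lam ≤ glauberP G lam I I := by
  obtain ⟨v⟩ := ‹Nonempty V›
  refine minMoveProb_le_glauberP hlam v ?_
  have h1 : 0 < lam + 1 := by positivity
  have hmin1 : min 1 lam ≤ 1 := min_le_left _ _
  have hminl : min 1 lam ≤ lam := min_le_right _ _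
  unfold glauberUpdate
  by_cases hv : v ∈ I
  · rw [if_pos hv, if_neg (Finset.erase_ne_self.2 hv).symm, if_pos rfl]
    gcongr
  · have hne : I ≠ insert v I := (Finset.insert_ne_self.2 hv).symm
    by_cases hins : IsIndep G (insert v I)
    · rw [if_neg hv, if_pos hins, if_neg hne, if_pos rfl]
      gcongr
    · rw [if_neg hv, if_neg hins, if_pos rfl, div_le_one h1]
      linarith

end GlauberKernel

section Mixing

variable {V : Type*} [Fintype V] [DecidableEq V] {G : SimpleGraph V} {lam : ℝ}

lemma stepDist_congr {μ ν : Finset V → ℝ} (h : ∀ I ∈ indepSets G, μ I = ν I) :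
    stepDist G lam μ = stepDist G lam ν :=
  funext fun _ => Finset.sum_congr rfl fun I hI => by rw [h I hI]

lemma iterate_stepDist_nonneg (hlam : 0 ≤ lam) {μ : Finset V → ℝ}
    (hμ : ∀ I ∈ indepSets G, 0 ≤ μ I) (s : ℕ) :
    ∀ J ∈ indepSets G, 0 ≤ (stepDist G lam)^[s] μ J := by
  induction s with
  | zero => exact hμ
  | succ s ih =>
    intro J _
    rw [Function.iterate_succ_apply']
    exact Finset.sum_nonneg fun I hI => mul_nonneg (ih I hI) (glauberP_nonneg hlam I J)

lemma sum_iterate_stepDist [Nonempty V] (hlam : 0 ≤ lam) (μ : Finset V → ℝ) (s : ℕ) :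
    ∑ J ∈ indepSets G, (stepDist G lam)^[s] μ J = ∑ I ∈ indepSets G, μ I := by
  induction s with
  | zero => rfl
  | succ s ih =>
    rw [Function.iterate_succ_apply', ← ih]
    unfold stepDist
    rw [Finset.sum_comm]
    refine Finset.sum_congr rfl fun I hI => ?_
    rw [← Finset.mul_sum, sum_glauberP hlam hI, mul_one]

lemma iterate_stepDist_le [Nonempty V] (hlam : 0 ≤ lam) {μ : Finset V → ℝ} {c : ℝ}
    (hμ : ∀ I ∈ indepSets G, μ I ≤ c * lam ^ I.card) (s : ℕ) :
    ∀ J ∈ indepSets G, (stepDist G lam)^[s] μ J ≤ c * lam ^ J.card := by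
  induction s with
  | zero => exact hμ
  | succ s ih =>
    intro J hJ
    rw [Function.iterate_succ_apply', ← sum_pow_card_mul_glauberP hlam hJ, Finset.mul_sum]
    refine Finset.sum_le_sum fun I hI => ?_
    rw [← mul_assoc]
    exact mul_le_mul_of_nonneg_right (ih I hI) (glauberP_nonneg hlam I J)

lemma iterate_stepDist_eq_sum (μ : Finset V → ℝ) (s : ℕ) {J : Finset V}
    (hJ : J ∈ indepSets G) :
    (stepDist G lam)^[s] μ J = ∑ I ∈ indepSets G, μ I * distAfter G lam I s J := by
  induction s generalizing J with
  | zero => simp [distAfter, hJ]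
  | succ s ih =>
    simp_rw [Function.iterate_succ_apply', distAfter, Function.iterate_succ_apply', stepDist,
      Finset.mul_sum]
    rw [Finset.sum_comm]
    refine Finset.sum_congr rfl fun K hK => ?_
    rw [ih hK, Finset.sum_mul]
    simp_rw [distAfter, mul_assoc]

lemma distAfter_nonneg (hlam : 0 ≤ lam) (I : Finset V) (s : ℕ) :
    ∀ J ∈ indepSets G, 0 ≤ distAfter G lam I s J :=
  iterate_stepDist_nonneg hlam (fun J _ => by positivity) s

lemma sum_distAfter [Nonempty V] (hlam : 0 ≤ lam) {I : Finset V} (hI : I ∈ indepSets G)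
    (s : ℕ) : ∑ J ∈ indepSets G, distAfter G lam I s J = 1 := by
  rw [distAfter, sum_iterate_stepDist hlam, Finset.sum_ite_eq', if_pos hI]

lemma distAfter_add (I : Finset V) (s s' : ℕ) {J : Finset V} (hJ : J ∈ indepSets G) :
    distAfter G lam I (s' + s) J
      = ∑ K ∈ indepSets G, distAfter G lam I s K * distAfter G lam K s' J := by
  rw [distAfter, Function.iterate_add_apply, iterate_stepDist_eq_sum _ _ hJ, distAfter]

lemma distAfter_one {I : Finset V} (hI : I ∈ indepSets G) (J : Finset V) :
    distAfter G lam I 1 J = glauberP G lam I J := by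
  simp [distAfter, stepDist, hI]

lemma glauberP_mul_distAfter_le (hlam : 0 ≤ lam) {I K J : Finset V} (hI : I ∈ indepSets G)
    (hK : K ∈ indepSets G) (hJ : J ∈ indepSets G) (s : ℕ) :
    glauberP G lam I K * distAfter G lam K s J ≤ distAfter G lam I (s + 1) J := by
  rw [distAfter_add I 1 s hJ, ← distAfter_one hI]
  exact Finset.single_le_sum (fun L hL => mul_nonneg (distAfter_nonneg hlam I 1 L hL)
    (distAfter_nonneg hlam L s J hJ)) hK

lemma exists_glauberP_step_toward [Nonempty V] (hlam : 0 ≤ lam) {I J : Finset V}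
    (hI : I ∈ indepSets G) (hJ : J ∈ indepSets G) :
    ∃ K ∈ indepSets G, minMoveProb V lam ≤ glauberP G lam I K ∧
      #(K \ J) + #(J \ K) ≤ #(I \ J) + #(J \ I) - 1 := by
  by_cases hIJ : I ⊆ J
  · by_cases hJI : J ⊆ I
    · obtain rfl := hIJ.antisymm hJI
      exact ⟨I, hI, minMoveProb_le_glauberP_self hlam I, by simp⟩
    obtain ⟨v, hvJ, hvI⟩ := Finset.not_subset.1 hJI
    have hK : IsIndep G (insert v I) := (mem_indepSets.1 hJ).subset (Finset.insert_subset hvJ hIJ)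
    refine ⟨insert v I, mem_indepSets.2 hK, minMoveProb_le_glauberP_insert hlam hvI hK, ?_⟩
    have hv : v ∈ J \ I := Finset.mem_sdiff.2 ⟨hvJ, hvI⟩
    rw [Finset.insert_sdiff_of_mem _ hvJ, Finset.sdiff_insert, Finset.card_erase_of_mem hv]
    have := Finset.card_pos.2 ⟨v, hv⟩
    omega
  · obtain ⟨v, hvI, hvJ⟩ := Finset.not_subset.1 hIJ
    refine ⟨I.erase v, mem_indepSets.2 ((mem_indepSets.1 hI).subset (Finset.erase_subset v I)),
      minMoveProb_le_glauberP_erase hlam hvI, ?_⟩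
    have hv : v ∈ I \ J := Finset.mem_sdiff.2 ⟨hvI, hvJ⟩
    rw [Finset.erase_sdiff_comm, Finset.card_erase_of_mem hv,
      show J \ I.erase v = J \ I by ext; simp; grind]
    have := Finset.card_pos.2 ⟨v, hv⟩
    omega

lemma minMoveProb_pow_le_distAfter [Nonempty V] (hlam : 0 ≤ lam) (s : ℕ) {I J : Finset V}
    (hI : I ∈ indepSets G) (hJ : J ∈ indepSets G) (hs : #(I \ J) + #(J \ I) ≤ s) :
    minMoveProb V lam ^ s ≤ distAfter G lam I s J := by
  induction s generalizing I with
  | zero =>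
    simp only [Nat.le_zero, Nat.add_eq_zero_iff, Finset.card_eq_zero,
      Finset.sdiff_eq_empty_iff_subset] at hs
    simp [distAfter, hs.1.antisymm hs.2]
  | succ s ih =>
    obtain ⟨K, hK, hIK, hKJ⟩ := exists_glauberP_step_toward hlam hI hJ
    have hε : 0 ≤ minMoveProb V lam := div_nonneg (le_min zero_le_one hlam) (by positivity)
    calc minMoveProb V lam ^ (s + 1) = minMoveProb V lam * minMoveProb V lam ^ s := pow_succ' _ _
      _ ≤ glauberP G lam I K * distAfter G lam K s J :=
        mul_le_mul hIK (ih hK (by omega)) (pow_nonneg hε s) (glauberP_nonneg hlam I K)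
      _ ≤ distAfter G lam I (s + 1) J := glauberP_mul_distAfter_le hlam hI hK hJ s

lemma iterate_stepDist_hardCore [Nonempty V] (hlam : 0 ≤ lam) (s : ℕ) :
    ∀ J ∈ indepSets G, (stepDist G lam)^[s] (hardCore G lam) J = hardCore G lam J := by
  induction s with
  | zero => exact fun _ _ => rfl
  | succ s ih =>
    intro J hJ
    rw [Function.iterate_succ_apply', stepDist_congr ih]
    unfold stepDist hardCore
    simp_rw [div_mul_eq_mul_div, ← Finset.sum_div, sum_pow_card_mul_glauberP hlam hJ]

lemma sum_hardCore_mul_distAfter [Nonempty V] (hlam : 0 ≤ lam) (s : ℕ) {J : Finset V}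
    (hJ : J ∈ indepSets G) :
    ∑ I ∈ indepSets G, hardCore G lam I * distAfter G lam I s J = hardCore G lam J := by
  rw [← iterate_stepDist_eq_sum _ _ hJ, iterate_stepDist_hardCore hlam s J hJ]

lemma tvDist_distAfter_add_le [Nonempty V] (hlam : 0 ≤ lam) {s₀ : ℕ} {δ : ℝ}
    (hδ : ∀ K ∈ indepSets G, ∀ J ∈ indepSets G, δ ≤ distAfter G lam K s₀ J)
    {I : Finset V} (hI : I ∈ indepSets G) (s : ℕ) :
    tvDist G (distAfter G lam I (s₀ + s)) (hardCore G lam)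
      ≤ (1 - δ * #(indepSets G)) * tvDist G (distAfter G lam I s) (hardCore G lam) := by
  have h := sum_abs_sum_mul_sub_le_of_le hδ (fun K hK => sum_distAfter hlam hK s₀)
    (fun J hJ => sum_hardCore_mul_distAfter hlam s₀ hJ)
    (μ := distAfter G lam I s) (by rw [sum_distAfter hlam hI, sum_hardCore hlam])
  unfold tvDist
  rw [Finset.sum_congr rfl fun J hJ => by rw [distAfter_add I s s₀ hJ]]
  linarith

lemma exists_tvDist_distAfter_le [Nonempty V] (hlam : 0 < lam) {η : ℝ} (hη : 0 < η) :
    ∃ T, ∀ I ∈ indepSets G, tvDist G (distAfter G lam I T) (hardCore G lam) ≤ η := by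
  set n := Fintype.card V
  set δ := minMoveProb V lam ^ (2 * n)
  set ρ := 1 - δ * #(indepSets G)
  -- any two independent sets are at most `2 n` single moves apart
  have hδ : ∀ K ∈ indepSets G, ∀ J ∈ indepSets G, δ ≤ distAfter G lam K (2 * n) J :=
    fun K hK J hJ => minMoveProb_pow_le_distAfter hlam.le _ hK hJ (by
      have := Finset.card_le_univ (K \ J)
      have := Finset.card_le_univ (J \ K)
      omega)
  have hρ1 : ρ < 1 := by
    have : 0 < δ * #(indepSets G) := mul_pos (pow_pos (minMoveProb_pos hlam) _)
      (Nat.cast_pos.2 (Finset.card_pos.2 ⟨∅, empty_mem_indepSets⟩))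
    linarith
  have hρ0 : 0 ≤ ρ := by
    have h := Finset.sum_le_sum (hδ ∅ empty_mem_indepSets)
    rw [sum_distAfter hlam.le empty_mem_indepSets, Finset.sum_const, nsmul_eq_mul] at h
    linarith
  have hgeom : ∀ j, ∀ I ∈ indepSets G,
      tvDist G (distAfter G lam I (2 * n * j)) (hardCore G lam) ≤ ρ ^ j := by
    intro j
    induction j with
    | zero =>
      intro I hI
      rw [pow_zero]
      exact tvDist_le_one (distAfter_nonneg hlam.le I _) (fun J _ => hardCore_nonneg hlam.le J)
        (sum_distAfter hlam.le hI _) (sum_hardCore hlam.le)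
    | succ j ih =>
      intro I hI
      rw [mul_add_one, add_comm, pow_succ']
      exact (tvDist_distAfter_add_le hlam.le hδ hI _).trans
        (mul_le_mul_of_nonneg_left (ih I hI) hρ0)
  obtain ⟨j, hj⟩ := exists_pow_lt_of_lt_one hη hρ1
  exact ⟨2 * n * j, fun I hI => (hgeom j I hI).trans hj.le⟩

lemma tvDist_distAfter_mixingTime_le [Nonempty V] (hlam : 0 < lam) {I : Finset V}
    (hI : I ∈ indepSets G) :
    tvDist G (distAfter G lam I (mixingTime G lam)) (hardCore G lam) ≤ 1 / 4 :=
  Nat.sInf_mem (exists_tvDist_distAfter_le hlam (by norm_num : (0 : ℝ) < 1 / 4)) I hI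

end Mixing

section Bottleneck

variable {V : Type*} [Fintype V] [DecidableEq V] {G : SimpleGraph V} {lam : ℝ}

lemma tvDist_iterate_stepDist_le {μ : Finset V → ℝ} (hμ : ∀ I ∈ indepSets G, 0 ≤ μ I)
    (hμ1 : ∑ I ∈ indepSets G, μ I = 1) (ν : Finset V → ℝ) (s : ℕ) :
    tvDist G ((stepDist G lam)^[s] μ) ν
      ≤ ∑ I ∈ indepSets G, μ I * tvDist G (distAfter G lam I s) ν := by
  have hJ : ∀ J ∈ indepSets G, |(stepDist G lam)^[s] μ J - ν J|
      ≤ ∑ I ∈ indepSets G, μ I * |distAfter G lam I s J - ν J| := by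
    intro J hJ
    have : (stepDist G lam)^[s] μ J - ν J
        = ∑ I ∈ indepSets G, μ I * (distAfter G lam I s J - ν J) := by
      simp_rw [mul_sub, Finset.sum_sub_distrib, ← Finset.sum_mul, hμ1, one_mul,
        iterate_stepDist_eq_sum μ s hJ]
    rw [this]
    refine (Finset.abs_sum_le_sum_abs _ _).trans_eq (Finset.sum_congr rfl fun I hI => ?_)
    rw [abs_mul, abs_of_nonneg (hμ I hI)]
  unfold tvDist
  calc 1 / 2 * ∑ J ∈ indepSets G, |(stepDist G lam)^[s] μ J - ν J|
      ≤ 1 / 2 * ∑ J ∈ indepSets G, ∑ I ∈ indepSets G, μ I * |distAfter G lam I s J - ν J| := by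
        gcongr with J hJ'
        exact hJ J hJ'
    _ = _ := by
        rw [Finset.sum_comm, Finset.mul_sum]
        simp_rw [Finset.mul_sum]
        exact Finset.sum_congr rfl fun I _ => Finset.sum_congr rfl fun J _ => by ring

lemma sum_sub_sum_le_tvDist {μ ν : Finset V → ℝ} {A : Finset (Finset V)} (hA : A ⊆ indepSets G)
    (hμν : ∑ I ∈ indepSets G, μ I = ∑ I ∈ indepSets G, ν I) :
    ∑ I ∈ A, μ I - ∑ I ∈ A, ν I ≤ tvDist G μ ν := by
  rw [← Finset.sum_sdiff hA, ← Finset.sum_sdiff hA (f := ν)] at hμν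
  have h₁ := Finset.abs_sum_le_sum_abs (fun I => μ I - ν I) A
  have h₂ := Finset.abs_sum_le_sum_abs (fun I => μ I - ν I) (indepSets G \ A)
  simp only [Finset.sum_sub_distrib] at h₁ h₂
  rw [tvDist, ← Finset.sum_sdiff hA]
  linarith [le_abs_self (∑ I ∈ A, μ I - ∑ I ∈ A, ν I),
    neg_abs_le (∑ I ∈ indepSets G \ A, μ I - ∑ I ∈ indepSets G \ A, ν I)]

lemma tvDist_iterate_stepDist_mixingTime_le [Nonempty V] (hlam : 0 < lam) {μ : Finset V → ℝ}
    (hμ : ∀ I ∈ indepSets G, 0 ≤ μ I) (hμ1 : ∑ I ∈ indepSets G, μ I = 1) :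
    tvDist G ((stepDist G lam)^[mixingTime G lam] μ) (hardCore G lam) ≤ 1 / 4 := by
  refine (tvDist_iterate_stepDist_le hμ hμ1 _ _).trans ?_
  calc ∑ I ∈ indepSets G, μ I * tvDist G (distAfter G lam I (mixingTime G lam)) (hardCore G lam)
      ≤ ∑ I ∈ indepSets G, μ I * (1 / 4) := Finset.sum_le_sum fun I hI =>
        mul_le_mul_of_nonneg_left (tvDist_distAfter_mixingTime_le hlam hI) (hμ I hI)
    _ = 1 / 4 := by rw [← Finset.sum_mul, hμ1, one_mul]

variable (G lam) in
/-- The stationary flow `Z_G(λ) · Q(A, 𝓘(G) \ A)` of the chain out of `A`. -/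
noncomputable def escapeFlow (A : Finset (Finset V)) : ℝ :=
  ∑ I ∈ A, lam ^ I.card * ∑ J ∈ indepSets G \ A, glauberP G lam I J

lemma sum_sdiff_stepDist_le [Nonempty V] (hlam : 0 ≤ lam) {A : Finset (Finset V)}
    (hA : A ⊆ indepSets G) {μ : Finset V → ℝ} {c : ℝ} (hμ : ∀ I ∈ indepSets G, 0 ≤ μ I)
    (hμc : ∀ I ∈ A, μ I ≤ c * lam ^ I.card) :
    ∑ J ∈ indepSets G \ A, stepDist G lam μ J
      ≤ ∑ I ∈ indepSets G \ A, μ I + c * escapeFlow G lam A := by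
  have hout : ∀ I ∈ indepSets G, ∑ J ∈ indepSets G \ A, glauberP G lam I J ≤ 1 := fun I hI =>
    (Finset.sum_le_sum_of_subset_of_nonneg Finset.sdiff_subset fun J _ _ =>
      glauberP_nonneg hlam I J).trans_eq (sum_glauberP hlam hI)
  unfold stepDist escapeFlow
  rw [Finset.sum_comm, Finset.mul_sum]
  simp_rw [← Finset.mul_sum]
  rw [← Finset.sum_sdiff hA, Finset.mul_sum]
  refine add_le_add (Finset.sum_le_sum fun I hI => ?_) (Finset.sum_le_sum fun I hI => ?_)
  · exact mul_le_of_le_one_right (hμ I (Finset.mem_sdiff.1 hI).1)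
      (hout I (Finset.mem_sdiff.1 hI).1)
  · rw [← mul_assoc]
    exact mul_le_mul_of_nonneg_right (hμc I hI)
      (Finset.sum_nonneg fun J _ => glauberP_nonneg hlam I J)

lemma sum_sdiff_iterate_stepDist_le [Nonempty V] (hlam : 0 ≤ lam) {A : Finset (Finset V)}
    (hA : A ⊆ indepSets G) {μ : Finset V → ℝ} {c : ℝ} (hμ : ∀ I ∈ indepSets G, 0 ≤ μ I)
    (hμc : ∀ I ∈ indepSets G, μ I ≤ c * lam ^ I.card) (s : ℕ) :
    ∑ J ∈ indepSets G \ A, (stepDist G lam)^[s] μ J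
      ≤ ∑ I ∈ indepSets G \ A, μ I + s * c * escapeFlow G lam A := by
  induction s with
  | zero => simp
  | succ s ih =>
    rw [Function.iterate_succ_apply']
    refine (sum_sdiff_stepDist_le hlam hA (iterate_stepDist_nonneg hlam hμ s)
      fun I hI => iterate_stepDist_le hlam hμc s I (hA hI)).trans ?_
    push_cast
    linarith

lemma escapeFlow_le_hardCoreWeight [Nonempty V] (hlam : 0 ≤ lam) {A B : Finset (Finset V)}
    (hA : A ⊆ indepSets G) (hB : B ⊆ indepSets G)
    (hzero : ∀ I ∈ A, ∀ J ∈ indepSets G \ A, J ∉ B → glauberP G lam I J = 0) :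
    escapeFlow G lam A ≤ hardCoreWeight lam B := by
  -- by reversibility, the flow from `A` into `B` is the flow from `B` into `A`
  calc escapeFlow G lam A
      ≤ ∑ I ∈ A, ∑ J ∈ B, lam ^ I.card * glauberP G lam I J := by
        unfold escapeFlow
        refine Finset.sum_le_sum fun I hI => ?_
        rw [Finset.mul_sum, ← Finset.sum_filter_of_ne (p := (· ∈ B)) fun J hJ hne => ?_]
        · exact Finset.sum_le_sum_of_subset_of_nonneg (fun J hJ => (Finset.mem_filter.1 hJ).2)
            fun J _ _ => mul_nonneg (by positivity) (glauberP_nonneg hlam I J)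
        · by_contra hJB
          exact hne (by rw [hzero I hI J hJ hJB, mul_zero])
    _ = ∑ J ∈ B, lam ^ J.card * ∑ I ∈ A, glauberP G lam J I := by
        rw [Finset.sum_comm]
        refine Finset.sum_congr rfl fun J hJ => ?_
        rw [Finset.mul_sum]
        exact Finset.sum_congr rfl fun I hI => glauberP_reversible (hA hI) (hB hJ)
    _ ≤ ∑ J ∈ B, lam ^ J.card * 1 := by
        gcongr with J hJ
        exact (Finset.sum_le_sum_of_subset_of_nonneg hA fun I _ _ =>
          glauberP_nonneg hlam J I).trans_eq (sum_glauberP hlam (hB hJ))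
    _ = hardCoreWeight lam B := by simp_rw [mul_one]; rfl

/-- Started from `π` conditioned on `A`, the chain leaves `A` with probability at most
`escapeFlow / hardCoreWeight` per step, but after `τ` steps it must have left `A` with probability
at least `1/2`, as it is then `1/4`-close to `π` and `π(A) ≤ 1/4`. -/
theorem hardCoreWeight_le_mixingTime_mul_escapeFlow [Nonempty V] (hlam : 0 < lam)
    {A : Finset (Finset V)} (hA : A ⊆ indepSets G) (hAne : A.Nonempty)
    (hZ : 4 * hardCoreWeight lam A ≤ Z G lam) :
    hardCoreWeight lam A ≤ 2 * mixingTime G lam * escapeFlow G lam A := by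
  set w := hardCoreWeight lam A
  set T := mixingTime G lam
  have hw : 0 < w := Finset.sum_pos (fun I _ => by positivity) hAne
  set μ : Finset V → ℝ := fun I => if I ∈ A then lam ^ I.card / w else 0
  have hμ : ∀ I ∈ indepSets G, 0 ≤ μ I := fun I _ => by positivity
  have hμ1 : ∑ I ∈ indepSets G, μ I = 1 := by
    rw [Finset.sum_ite_mem, Finset.inter_eq_right.2 hA, ← Finset.sum_div]
    exact div_self hw.ne'
  have hμc : ∀ I ∈ indepSets G, μ I ≤ w⁻¹ * lam ^ I.card := fun I _ => by
    by_cases hI : I ∈ A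
    · simp [μ, hI, div_eq_inv_mul]
    · simp only [μ, if_neg hI]
      positivity
  have hμA : ∑ I ∈ indepSets G \ A, μ I = 0 :=
    Finset.sum_eq_zero fun I hI => if_neg (Finset.mem_sdiff.1 hI).2
  have hleave := sum_sdiff_iterate_stepDist_le hlam.le hA hμ hμc T
  have hmass := sum_iterate_stepDist (G := G) hlam.le μ T
  rw [← Finset.sum_sdiff hA, hμ1] at hmass
  have hmixed := tvDist_iterate_stepDist_mixingTime_le hlam hμ hμ1
  have hsep := sum_sub_sum_le_tvDist (μ := (stepDist G lam)^[T] μ) (ν := hardCore G lam) hA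
    (by rw [sum_iterate_stepDist hlam.le, hμ1, sum_hardCore hlam.le])
  have hπA : ∑ I ∈ A, hardCore G lam I ≤ 1 / 4 := by
    unfold hardCore
    rw [← Finset.sum_div, div_le_iff₀ (zero_lt_one.trans_le (one_le_Z hlam.le))]
    change w ≤ _
    linarith
  have hhalf : 1 / 2 ≤ T * w⁻¹ * escapeFlow G lam A := by linarith
  calc w = 2 * (1 / 2) * w := by ring
    _ ≤ 2 * (T * w⁻¹ * escapeFlow G lam A) * w := by gcongr
    _ = 2 * T * escapeFlow G lam A := by field_simp

end Bottleneck

section PathDecompositions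

variable {V : Type*} {G : SimpleGraph V}

lemma IsPathDecomp.exists_subset_bag {p : ℕ} {X : Fin p → Finset V} (hX : IsPathDecomp G p X)
    {S T : Finset V} (hS : S.Nonempty) (hST : ∀ s ∈ S, ∀ u ∈ T, G.Adj s u) :
    ∃ j, S ⊆ X j ∨ T ⊆ X j := by
  classical
  obtain ⟨hcover, hedge, hinterval⟩ := hX
  have hlast : ∀ v, ∃ j, v ∈ X j ∧ ∀ i, v ∈ X i → i ≤ j := fun v => by
    obtain ⟨i, hi⟩ := hcover v
    obtain ⟨j, hj, hmax⟩ := (Finset.univ.filter (v ∈ X ·)).exists_max_image id ⟨i, by simpa⟩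
    exact ⟨j, (Finset.mem_filter.1 hj).2, fun i hi => hmax i (by simpa)⟩
  choose last hlast_mem hlast_le using hlast
  obtain ⟨s₀, hs₀, hmin⟩ := S.exists_min_image last hS
  refine ⟨last s₀, or_iff_not_imp_left.2 fun hS₀ => Finset.subset_iff.2 fun u hu => ?_⟩
  obtain ⟨s₁, hs₁, hs₁b⟩ := Finset.not_subset.1 hS₀
  -- `s₀` occurs in no bag after `last s₀` and `s₁` in none up to it, so `u`, adjacent to both,
  -- occurs in bags on both sides
  have hafter : ∀ i, s₁ ∈ X i → last s₀ < i := fun i hi => lt_of_not_ge fun hle =>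
    hs₁b (hinterval s₁ i _ (last s₁) hle (hmin s₁ hs₁) hi (hlast_mem s₁))
  obtain ⟨i₀, hi₀s, hi₀u⟩ := hedge s₀ u (hST s₀ hs₀ u hu)
  obtain ⟨i₁, hi₁s, hi₁u⟩ := hedge s₁ u (hST s₁ hs₁ u hu)
  exact hinterval u i₀ _ i₁ (hlast_le s₀ i₀ hi₀s) (hafter i₁ hi₁s).le hi₀u hi₁u

variable [Fintype V] [DecidableEq V]

lemma le_alphaOn {S I : Finset V} (hI : I ∈ indepSets G) (hIS : I ⊆ S) : #I ≤ alphaOn G S :=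
  Finset.le_sup (f := Finset.card) (Finset.mem_filter.2 ⟨hI, hIS⟩)

lemma alphaOn_le {S : Finset V} {k : ℕ} (h : ∀ I ∈ indepSets G, I ⊆ S → #I ≤ k) :
    alphaOn G S ≤ k :=
  Finset.sup_le fun I hI => h I (Finset.mem_filter.1 hI).1 (Finset.mem_filter.1 hI).2

lemma exists_card_eq_alphaOn (S : Finset V) :
    ∃ I ∈ indepSets G, I ⊆ S ∧ #I = alphaOn G S := by
  obtain ⟨I, hI, hcard⟩ := Finset.exists_mem_eq_sup ((indepSets G).filter (· ⊆ S))
    ⟨∅, Finset.mem_filter.2 ⟨empty_mem_indepSets, Finset.empty_subset S⟩⟩ Finset.card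
  exact ⟨I, (Finset.mem_filter.1 hI).1, (Finset.mem_filter.1 hI).2, hcard.symm⟩

lemma alphaOn_le_of_isClique {ι : Type*} [Fintype ι] {K : ι → Finset V}
    (hK : ∀ i, G.IsClique (K i : Set V)) {S : Finset V} (hS : S ⊆ Finset.univ.biUnion K) :
    alphaOn G S ≤ Fintype.card ι := by
  refine alphaOn_le fun I hI hIS => ?_
  have hmeet : ∀ i, #(I ∩ K i) ≤ 1 := fun i => Finset.card_le_one.2 fun a ha b hb => by
    by_contra hab
    exact mem_indepSets.1 hI a (Finset.mem_inter.1 ha).1 b (Finset.mem_inter.1 hb).1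
      (hK i (Finset.mem_inter.1 ha).2 (Finset.mem_inter.1 hb).2 hab)
  calc #I ≤ #(Finset.univ.biUnion fun i => I ∩ K i) := Finset.card_le_card fun v hv => by
        obtain ⟨i, -, hvi⟩ := Finset.mem_biUnion.1 (hS (hIS hv))
        exact Finset.mem_biUnion.2 ⟨i, Finset.mem_univ i, Finset.mem_inter.2 ⟨hv, hvi⟩⟩
    _ ≤ ∑ i, #(I ∩ K i) := Finset.card_biUnion_le
    _ ≤ ∑ _i : ι, 1 := Finset.sum_le_sum fun i _ => hmeet i
    _ = Fintype.card ι := by simp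

lemma alphaOn_insert_le {W : Finset V} {v : V} (hv : ∀ w ∈ W, G.Adj v w) :
    alphaOn G (insert v W) ≤ max (alphaOn G W) 1 := by
  refine alphaOn_le fun I hI hIW => ?_
  by_cases hvI : v ∈ I
  · refine le_max_of_le_right (Finset.card_le_one.2 fun a ha b hb => ?_)
    have hsingle : ∀ u ∈ I, u = v := fun u hu => by
      by_contra huv
      have huW : u ∈ W := (Finset.mem_insert.1 (hIW hu)).resolve_left huv
      exact mem_indepSets.1 hI v hvI u hu (hv u huW)
    rw [hsingle a ha, hsingle b hb]
  · exact le_max_of_le_left (le_alphaOn hI fun u hu =>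
      (Finset.mem_insert.1 (hIW hu)).resolve_left fun h => hvI (h ▸ hu))

lemma isPathDecomp_insert (W : Finset V) (hW : ∀ u ∉ W, ∀ v ∉ W, ¬ G.Adj u v) :
    IsPathDecomp G (Fintype.card V) fun j => insert ((Fintype.equivFin V).symm j) W := by
  set e := Fintype.equivFin V
  refine ⟨fun v => ⟨e v, by simp⟩, fun u v huv => ?_, fun v i j k hij hjk hvi hvk => ?_⟩
  · by_cases hu : u ∈ W
    · by_cases hv : v ∈ W
      · exact ⟨e u, by simp [hu, hv]⟩
      · exact ⟨e v, by simp [hu]⟩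
    · exact ⟨e u, by simp, Finset.mem_insert_of_mem (by_contra fun hv => hW u hu v hv huv)⟩
  · by_cases hv : v ∈ W
    · exact Finset.mem_insert_of_mem hv
    · have hi : v = e.symm i := (Finset.mem_insert.1 hvi).resolve_right hv
      have hk : v = e.symm k := (Finset.mem_insert.1 hvk).resolve_right hv
      obtain rfl : i = k := e.symm.injective (hi.symm.trans hk)
      obtain rfl : j = i := le_antisymm hjk hij
      exact hvi

lemma pathAlpha_eq_of_forall_exists_le {k : ℕ}
    (hdecomp : ∃ p X, IsPathDecomp G p X ∧ ∀ i, alphaOn G (X i) ≤ k)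
    (hbag : ∀ p X, IsPathDecomp G p X → ∃ i, k ≤ alphaOn G (X i)) : pathAlpha G = k := by
  obtain ⟨p, X, hX, hk⟩ := hdecomp
  refine le_antisymm (Nat.sInf_le ⟨p, X, hX, hk⟩) (le_csInf ⟨k, p, X, hX, hk⟩ ?_)
  rintro k' ⟨p', X', hX', hk'⟩
  obtain ⟨i, hi⟩ := hbag p' X' hX'
  exact hi.trans (hk' i)

theorem pathAlpha_eq_alphaOn {W : Finset V} (hWc : ∀ u ∉ W, ∀ v ∉ W, ¬ G.Adj u v)
    (hjoin : ∀ u ∉ W, ∀ w ∈ W, G.Adj u w) (hα : 1 ≤ alphaOn G W) (hcard : alphaOn G W ≤ #Wᶜ) :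
    pathAlpha G = alphaOn G W := by
  refine pathAlpha_eq_of_forall_exists_le ⟨_, _, isPathDecomp_insert W hWc, fun j => ?_⟩ ?_
  · set v := (Fintype.equivFin V).symm j
    by_cases hv : v ∈ W
    · rw [Finset.insert_eq_of_mem hv]
    · exact (alphaOn_insert_le (hjoin v hv)).trans (max_le le_rfl hα)
  · intro p X hX
    obtain ⟨S, hS, hSW, hScard⟩ := exists_card_eq_alphaOn (G := G) W
    have hSne : S.Nonempty := Finset.card_pos.1 (hScard ▸ hα)
    obtain ⟨j, hSj | hWj⟩ := hX.exists_subset_bag hSne fun s hs u hu =>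
      (hjoin u (Finset.mem_compl.1 hu) s (hSW hs)).symm
    · exact ⟨j, hScard ▸ le_alphaOn hS hSj⟩
    · refine ⟨j, hcard.trans (le_alphaOn (mem_indepSets.2 fun u hu v hv => ?_) hWj)⟩
      exact hWc u (Finset.mem_compl.1 hu) v (Finset.mem_compl.1 hv)

end PathDecompositions

section Join

variable {V : Type*} [Fintype V] [DecidableEq V] {G : SimpleGraph V} {lam : ℝ}

variable (G) in
noncomputable def nonemptyIndepSubsets (W : Finset V) : Finset (Finset V) :=
  (indepSets G).filter fun I => I.Nonempty ∧ I ⊆ W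

lemma mem_nonemptyIndepSubsets {W I : Finset V} :
    I ∈ nonemptyIndepSubsets G W ↔ I ∈ indepSets G ∧ I.Nonempty ∧ I ⊆ W :=
  Finset.mem_filter

lemma glauberUpdate_eq_zero_of_join {W : Finset V} (hjoin : ∀ u ∉ W, ∀ w ∈ W, G.Adj u w)
    {I J : Finset V} (hI : I ∈ nonemptyIndepSubsets G W)
    (hJ : J ∈ indepSets G \ nonemptyIndepSubsets G W) (hJ₀ : J ≠ ∅) (v : V) :
    glauberUpdate G lam v I J = 0 := by
  obtain ⟨hI, ⟨w, hw⟩, hIW⟩ := mem_nonemptyIndepSubsets.1 hI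
  obtain ⟨hJ, hJA⟩ := Finset.mem_sdiff.1 hJ
  have hJW : ¬ J ⊆ W := fun hJW =>
    hJA (mem_nonemptyIndepSubsets.2 ⟨hJ, Finset.nonempty_iff_ne_empty.2 hJ₀, hJW⟩)
  unfold glauberUpdate
  split_ifs with hv h₁ h₂ hins h₁ h₂ h₁ <;> try rfl
  · exact absurd ((Finset.erase_subset v I).trans hIW) (h₁ ▸ hJW)
  · exact absurd hIW (h₂ ▸ hJW)
  · refine absurd (Finset.insert_subset (by_contra fun hvW => ?_) hIW) (h₁ ▸ hJW)
    exact hins v (Finset.mem_insert_self v I) w (Finset.mem_insert_of_mem hw)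
      (hjoin v hvW w (hIW hw))
  · exact absurd hIW (h₂ ▸ hJW)
  · exact absurd hIW (h₁ ▸ hJW)

/-- In a join with `Wᶜ`, the chain can leave the nonempty independent subsets of `W` only
through `∅`. -/
lemma escapeFlow_nonemptyIndepSubsets_le_one [Nonempty V] (hlam : 0 ≤ lam) {W : Finset V}
    (hjoin : ∀ u ∉ W, ∀ w ∈ W, G.Adj u w) : escapeFlow G lam (nonemptyIndepSubsets G W) ≤ 1 := by
  refine (escapeFlow_le_hardCoreWeight hlam (Finset.filter_subset _ _) (B := {∅})
    (by simpa using empty_mem_indepSets) fun I hI J hJ hJ₀ => ?_).trans_eq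
    (by simp [hardCoreWeight])
  rw [glauberP_eq_sum, Finset.sum_eq_zero fun v _ =>
    glauberUpdate_eq_zero_of_join hjoin hI hJ (by simpa using hJ₀) v, mul_zero]

end Join

section Construction

def cliquesJoin (t m r : ℕ) : SimpleGraph ((Fin t × Fin m) ⊕ Fin r) where
  Adj
    | .inl a, .inl b => a.1 = b.1 ∧ a.2 ≠ b.2
    | .inl _, .inr _ => True
    | .inr _, .inl _ => True
    | .inr _, .inr _ => False
  symm := ⟨by
    rintro (a | a) (b | b) h
    · exact ⟨h.1.symm, h.2.symm⟩
    all_goals trivial⟩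
  loopless := ⟨by
    rintro (a | a) h
    · exact h.2 rfl
    · exact h⟩

def cliquesJoinVertex (t m r : ℕ) : (Fin t × Fin m) ⊕ Fin r ≃ Fin (t * m + r) :=
  (Equiv.sumCongr finProdFinEquiv (Equiv.refl _)).trans finSumFinEquiv

def cliquesJoinFin (t m r : ℕ) : SimpleGraph (Fin (t * m + r)) :=
  (cliquesJoin t m r).comap (cliquesJoinVertex t m r).symm

variable {t m r : ℕ}

@[simp] lemma cliquesJoinFin_adj {x y : (Fin t × Fin m) ⊕ Fin r} :
    (cliquesJoinFin t m r).Adj (cliquesJoinVertex t m r x) (cliquesJoinVertex t m r y)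
      ↔ (cliquesJoin t m r).Adj x y := by
  simp [cliquesJoinFin]

variable (t m r) in
def cliqueVertices : Finset (Fin (t * m + r)) :=
  Finset.univ.map (Function.Embedding.inl.trans (cliquesJoinVertex t m r).toEmbedding)

@[simp] lemma cliquesJoinVertex_mem_cliqueVertices {x : (Fin t × Fin m) ⊕ Fin r} :
    cliquesJoinVertex t m r x ∈ cliqueVertices t m r ↔ x.isLeft := by
  cases x <;> simp [cliqueVertices]

lemma card_compl_cliqueVertices : #(cliqueVertices t m r)ᶜ = r := by
  rw [Finset.card_compl, Fintype.card_fin, cliqueVertices, Finset.card_map, Finset.card_univ,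
    Fintype.card_prod, Fintype.card_fin, Fintype.card_fin, Nat.add_sub_cancel_left]

lemma card_cliqueVertices : #(cliqueVertices t m r) = t * m := by
  rw [cliqueVertices, Finset.card_map, Finset.card_univ, Fintype.card_prod, Fintype.card_fin,
    Fintype.card_fin]

lemma cliquesJoinFin_not_adj {u v : Fin (t * m + r)} (hu : u ∉ cliqueVertices t m r)
    (hv : v ∉ cliqueVertices t m r) : ¬ (cliquesJoinFin t m r).Adj u v := by
  obtain ⟨x, rfl⟩ := (cliquesJoinVertex t m r).surjective u
  obtain ⟨y, rfl⟩ := (cliquesJoinVertex t m r).surjective v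
  cases x <;> cases y <;> simp_all [cliquesJoin]

lemma cliquesJoinFin_adj_of_notMem {u w : Fin (t * m + r)} (hu : u ∉ cliqueVertices t m r)
    (hw : w ∈ cliqueVertices t m r) : (cliquesJoinFin t m r).Adj u w := by
  obtain ⟨x, rfl⟩ := (cliquesJoinVertex t m r).surjective u
  obtain ⟨y, rfl⟩ := (cliquesJoinVertex t m r).surjective w
  cases x <;> cases y <;> simp_all [cliquesJoin]

variable (r) in
def cliquesTransversal (f : Fin t → Fin m) : Finset (Fin (t * m + r)) :=
  Finset.univ.image fun i => cliquesJoinVertex t m r (.inl (i, f i))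

lemma card_cliquesTransversal (f : Fin t → Fin m) : #(cliquesTransversal r f) = t := by
  rw [cliquesTransversal, Finset.card_image_of_injective _ fun i j h =>
    (by simpa using h : i = j ∧ _).1, Finset.card_univ, Fintype.card_fin]

lemma cliquesTransversal_injective :
    Function.Injective (cliquesTransversal (t := t) (m := m) r) := by
  intro f g h
  funext i
  have : cliquesJoinVertex t m r (.inl (i, f i)) ∈ cliquesTransversal r g :=
    h ▸ Finset.mem_image_of_mem _ (Finset.mem_univ i)
  obtain ⟨j, -, hj⟩ := Finset.mem_image.1 this
  simp only [EmbeddingLike.apply_eq_iff_eq, Sum.inl.injEq, Prod.mk.injEq] at hj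
  exact hj.1 ▸ hj.2.symm

lemma cliquesTransversal_mem_nonemptyIndepSubsets (ht : 1 ≤ t) (f : Fin t → Fin m) :
    cliquesTransversal r f
      ∈ nonemptyIndepSubsets (cliquesJoinFin t m r) (cliqueVertices t m r) := by
  refine mem_nonemptyIndepSubsets.2 ⟨mem_indepSets.2 ?_, ?_, ?_⟩
  · simp only [IsIndep, cliquesTransversal, Finset.mem_image, Finset.mem_univ, true_and]
    rintro _ ⟨i, rfl⟩ _ ⟨j, rfl⟩
    simp only [cliquesJoinFin_adj, cliquesJoin, not_and, not_not]
    rintro rfl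
    rfl
  · exact Finset.card_pos.1 ((card_cliquesTransversal f).symm ▸ ht)
  · intro u hu
    obtain ⟨i, -, rfl⟩ := Finset.mem_image.1 hu
    simp

lemma alphaOn_cliqueVertices (hm : 1 ≤ m) :
    alphaOn (cliquesJoinFin t m r) (cliqueVertices t m r) = t := by
  refine le_antisymm ?_ ?_
  · calc alphaOn (cliquesJoinFin t m r) (cliqueVertices t m r) ≤ Fintype.card (Fin t) := by
          refine alphaOn_le_of_isClique (K := fun i => Finset.univ.image fun x =>
            cliquesJoinVertex t m r (.inl (i, x))) (fun i => ?_) fun u hu => ?_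
          · rintro _ hu _ hv huv
            obtain ⟨x, -, rfl⟩ := Finset.mem_image.1 hu
            obtain ⟨y, -, rfl⟩ := Finset.mem_image.1 hv
            simpa [cliquesJoin] using huv
          · obtain ⟨⟨i, x⟩ | j, rfl⟩ := (cliquesJoinVertex t m r).surjective u
            · simp
            · simp at hu
      _ = t := Fintype.card_fin t
  · rcases Nat.eq_zero_or_pos t with rfl | ht
    · exact Nat.zero_le _
    have hf := cliquesTransversal_mem_nonemptyIndepSubsets (r := r) ht fun _ => ⟨0, hm⟩
    obtain ⟨hI, -, hIW⟩ := mem_nonemptyIndepSubsets.1 hf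
    exact (card_cliquesTransversal (r := r) (fun _ => ⟨0, hm⟩)).symm.trans_le (le_alphaOn hI hIW)

lemma pow_le_hardCoreWeight_cliquesJoinFin (ht : 1 ≤ t) {lam : ℝ} (hlam : 0 ≤ lam) :
    (m * lam) ^ t ≤ hardCoreWeight lam
      (nonemptyIndepSubsets (cliquesJoinFin t m r) (cliqueVertices t m r)) := by
  calc (m * lam) ^ t = ∑ f : Fin t → Fin m, lam ^ #(cliquesTransversal r f) := by
        simp [card_cliquesTransversal, mul_pow]
    _ = ∑ I ∈ Finset.univ.image (cliquesTransversal r), lam ^ #I :=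
        (Finset.sum_image (f := fun I => lam ^ #I) fun _ _ _ _ h =>
          cliquesTransversal_injective h).symm
    _ ≤ _ := Finset.sum_le_sum_of_subset_of_nonneg (fun I hI => by
          obtain ⟨f, -, rfl⟩ := Finset.mem_image.1 hI
          exact cliquesTransversal_mem_nonemptyIndepSubsets ht f) fun I _ _ => by positivity

theorem pathAlpha_cliquesJoinFin (ht : 1 ≤ t) (hm : 1 ≤ m) (htr : t ≤ r) :
    pathAlpha (cliquesJoinFin t m r) = t := by
  have hα := alphaOn_cliqueVertices (t := t) (r := r) hm
  refine (pathAlpha_eq_alphaOn (fun u hu v hv => cliquesJoinFin_not_adj hu hv)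
    (fun u hu w hw => cliquesJoinFin_adj_of_notMem hu hw) ?_ ?_).trans hα
  · rwa [hα]
  · rwa [hα, card_compl_cliqueVertices]

theorem pow_le_two_mul_mixingTime_cliquesJoinFin (ht : 1 ≤ t) (hm : 1 ≤ m) {lam : ℝ}
    (hlam : 1 ≤ lam) :
    (m * lam) ^ t ≤ 2 * mixingTime (cliquesJoinFin t m (t * m + 2)) lam := by
  set G := cliquesJoinFin t m (t * m + 2)
  set A := nonemptyIndepSubsets G (cliqueVertices t m (t * m + 2))
  have : Nonempty (Fin (t * m + (t * m + 2))) := ⟨0⟩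
  have hw := pow_le_hardCoreWeight_cliquesJoinFin (m := m) (r := t * m + 2) ht
    (zero_le_one.trans hlam)
  have hAne : A.Nonempty := ⟨_, cliquesTransversal_mem_nonemptyIndepSubsets ht fun _ => ⟨0, hm⟩⟩
  -- `π(A) ≤ 1/4`, since `Wᶜ` alone has two more vertices than `W`
  have hZ : 4 * hardCoreWeight lam A ≤ Z G lam := by
    have hWle : hardCoreWeight lam A ≤ (1 + lam) ^ (t * m) := by
      refine (hardCoreWeight_le_of_subset_powerset (by linarith) fun I hI =>
        Finset.mem_powerset.2 (mem_nonemptyIndepSubsets.1 hI).2.2).trans_eq ?_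
      rw [card_cliqueVertices]
    calc 4 * hardCoreWeight lam A ≤ (1 + lam) ^ 2 * (1 + lam) ^ (t * m) :=
          mul_le_mul (by nlinarith) hWle ((by positivity : (0 : ℝ) ≤ (m * lam) ^ t).trans hw)
            (by positivity)
      _ = (1 + lam) ^ #(cliqueVertices t m (t * m + 2))ᶜ := by
          rw [card_compl_cliqueVertices, ← pow_add, Nat.add_comm]
      _ ≤ Z G lam := pow_card_le_Z (by linarith) fun u hu v hv =>
          cliquesJoinFin_not_adj (Finset.mem_compl.1 hu) (Finset.mem_compl.1 hv)
  calc (m * lam) ^ t ≤ hardCoreWeight lam A := hw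
    _ ≤ 2 * mixingTime G lam * escapeFlow G lam A :=
        hardCoreWeight_le_mixingTime_mul_escapeFlow (by linarith) (Finset.filter_subset _ _)
          hAne hZ
    _ ≤ 2 * mixingTime G lam * 1 := by
        gcongr
        exact escapeFlow_nonemptyIndepSubsets_le_one (by linarith)
          fun u hu w hw => cliquesJoinFin_adj_of_notMem hu hw
    _ = 2 * mixingTime G lam := mul_one _

end Construction

/-- For every integer `t ≥ 1` there is a constant `c_t > 0` (depending only
on `t`) and infinitely many graphs `G` with path-independence number `path-α(G) = t` such
that for every `λ ≥ 1`, `τ_{G,λ} ≥ c_t · (nλ)^t` where `n = |V(G)|`. -/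
theorem statement_7 (t : ℕ) (ht : 1 ≤ t) :
    ∃ c : ℝ, 0 < c ∧
      ∀ N : ℕ, ∃ n : ℕ, N ≤ n ∧
        ∃ G : SimpleGraph (Fin n),
          pathAlpha G = t ∧
          ∀ lam : ℝ, 1 ≤ lam →
            c * ((n : ℝ) * lam) ^ t ≤ (mixingTime G lam : ℝ) := by
  refine ⟨1 / (2 * (4 * t) ^ t), by positivity, fun N => ?_⟩
  set m := N + 1
  have hm : 1 ≤ m := Nat.le_add_left 1 N
  have hmtm : m ≤ t * m := Nat.le_mul_of_pos_left m ht
  refine ⟨t * m + (t * m + 2), by omega, cliquesJoinFin t m (t * m + 2),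
    pathAlpha_cliquesJoinFin ht hm (by nlinarith), fun lam hlam => ?_⟩
  have hn : ((t * m + (t * m + 2) : ℕ) : ℝ) * lam ≤ 4 * t * (m * lam) := by
    have h : t * m + (t * m + 2) ≤ 4 * (t * m) := by omega
    have h' : ((t * m + (t * m + 2) : ℕ) : ℝ) ≤ 4 * t * m := by
      rw [mul_assoc]; exact_mod_cast h
    nlinarith
  calc 1 / (2 * (4 * t) ^ t) * (((t * m + (t * m + 2) : ℕ) : ℝ) * lam) ^ t
      ≤ 1 / (2 * (4 * t) ^ t) * ((4 * t) ^ t * (m * lam) ^ t) := by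
        rw [← mul_pow]
        gcongr
    _ = (m * lam) ^ t / 2 := by field_simp
    _ ≤ mixingTime (cliquesJoinFin t m (t * m + 2)) lam := by
        linarith [pow_le_two_mul_mixingTime_cliquesJoinFin ht hm hlam]
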